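/- arXiv:1203.2090 — 2 statements merged into one kernel-verified Lean document; each statement's English description precedes it below -/
import Mathlib

section
/- Define the game F-Wythoff on positions (a,b) of nonnegative integers (unordered pairs), where a legal move from (a,b) with a ≤ b is either: removing any positive number of tokens from one pile, or removing k ≥ 1 tokens from both piles provided a - k ≥ 1 and ⌊(b-k)/(a-k)⌋ = ⌊b/a⌋ (integer division). Then the set of P-positions of F-Wythoff is exactly {(0,0)} ∪ {(⌊φn⌋+1, ⌊φ²n⌋+1) : n ≥ 0}, where φ = (1+√5)/2. -/
noncomputable def phi : ℝ := (1 + Real.sqrt 5) / 2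

noncomputable def fl (n : ℕ) : ℕ := ⌊phi * n⌋₊

noncomputable def fl2 (n : ℕ) : ℕ := ⌊phi ^ 2 * n⌋₊

def FMove (p q : ℕ × ℕ) : Prop :=
  ∃ a b x y : ℕ, a ≤ b ∧ x ≤ y ∧ (p = (a, b) ∨ p = (b, a)) ∧ (q = (x, y) ∨ q = (y, x)) ∧
    ((x = a ∧ y < b) ∨ (x < a ∧ y = b) ∨ (x < a ∧ y = a) ∨
      (∃ k, 1 ≤ k ∧ k < a ∧ (b - k) / (a - k) = b / a ∧ x = a - k ∧ y = b - k))

theorem fMove_lt {p q : ℕ × ℕ} (h : FMove p q) : q.1 + q.2 < p.1 + p.2 := by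
  obtain ⟨a, b, x, y, hab, hxy, hp, hq, hc⟩ := h
  have hps : p.1 + p.2 = a + b := by rcases hp with h | h <;> subst h <;> simp <;> omega
  have hqs : q.1 + q.2 = x + y := by rcases hq with h | h <;> subst h <;> simp <;> omega
  rw [hps, hqs]
  rcases hc with ⟨h1, h2⟩ | ⟨h1, h2⟩ | ⟨h1, h2⟩ | ⟨k, hk1, hk2, _, h1, h2⟩ <;> omega

def PPos (p : ℕ × ℕ) : Prop := ∀ q, FMove p q → ¬ PPos q
termination_by p.1 + p.2
decreasing_by exact fMove_lt (by assumption)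

noncomputable def grundy (p : ℕ × ℕ) : ℕ :=
  sInf {g : ℕ | ∀ q, FMove p q → grundy q ≠ g}
termination_by p.1 + p.2
decreasing_by exact fMove_lt (by assumption)

/-!
Write `A n = ⌊φn⌋ + 1` and `B n = ⌊φ²n⌋ + 1 = A n + n`. By Rayleigh's theorem, `⌊φn⌋` and
`⌊φ²n⌋` (`n ≥ 1`) partition the positive integers, so every `a ≥ 1` is `A m` for some `m ≥ 0` or
`B m` for some `m ≥ 1`, but not both. Hence the candidate set is independent: no move joins two
of its pairs, since they share no entry and a diagonal move preserves the difference `n` of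
`(A n, B n)`. It is also absorbing: from `(A m, b)` move to `(A m, B m)` if `b > B m`, or
diagonally to `(A d, B d)` with `d = b - A m < m` if `b < B m` (both ratios lie in `[1, 2)`, so
the floor-quotient condition holds); from `(B m, b)` move to `(A m, B m)`.
-/

open Real

lemma Real.holderConjugate_goldenRatio_sq : goldenRatio.HolderConjugate (goldenRatio ^ 2) := by
  refine holderConjugate_iff.2 ⟨one_lt_goldenRatio, ?_⟩
  rw [← inv_pow, inv_goldenRatio, neg_sq, goldenConj_sq]
  ring

lemma Nat.strictMono_floor_mul {r : ℝ} (hr : 1 ≤ r) : StrictMono fun n : ℕ ↦ ⌊r * n⌋₊ := by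
  refine strictMono_nat_of_lt_succ fun n ↦ ?_
  have hstep : r * n + 1 ≤ r * (n + 1 : ℕ) := by push_cast; linarith
  calc ⌊r * n⌋₊ < ⌊r * n⌋₊ + 1 := Nat.lt_succ_self _
    _ = ⌊r * n + 1⌋₊ := (Nat.floor_add_one (by positivity)).symm
    _ ≤ ⌊r * (n + 1 : ℕ)⌋₊ := Nat.floor_le_floor hstep

lemma Nat.div_eq_one_of_le_of_lt_two_mul {a b : ℕ} (hab : a ≤ b) (hb : b < 2 * a) : b / a = 1 :=
  Nat.div_eq_of_lt_le (by omega) (by omega)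

lemma natCast_mem_beattySeq_pos_iff {r : ℝ} (hr : 0 ≤ r) (c : ℕ) :
    (c : ℤ) ∈ {beattySeq r k | k > 0} ↔ ∃ n : ℕ, 0 < n ∧ ⌊r * n⌋₊ = c := by
  have hcast (n : ℕ) : beattySeq r n = ⌊r * n⌋₊ := by
    rw [beattySeq, Int.natCast_floor_eq_floor (by positivity), Int.cast_natCast, mul_comm]
  constructor
  · rintro ⟨k, hk, hkc⟩
    lift k to ℕ using hk.le
    exact ⟨k, by exact_mod_cast hk, by rw [hcast] at hkc; exact_mod_cast hkc⟩
  · rintro ⟨n, hn, hnc⟩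
    exact ⟨n, by exact_mod_cast hn, by rw [hcast, hnc]⟩

/-- Rayleigh's theorem on Beatty sequences, over `ℕ`. -/
theorem Irrational.exists_floor_mul_eq_iff_not {r s : ℝ} (hrs : r.HolderConjugate s)
    (hr : Irrational r) {c : ℕ} (hc : 0 < c) :
    (∃ n : ℕ, 0 < n ∧ ⌊r * n⌋₊ = c) ↔ ¬ ∃ n : ℕ, 0 < n ∧ ⌊s * n⌋₊ = c := by
  have hpos : (c : ℤ) ∈ {n : ℤ | 0 < n} := by simpa using hc
  rw [← hr.beattySeq_symmDiff_beattySeq_pos hrs, Set.mem_symmDiff,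
    natCast_mem_beattySeq_pos_iff hrs.nonneg, natCast_mem_beattySeq_pos_iff hrs.symm.nonneg]
    at hpos
  rcases hpos with ⟨hr, hs⟩ | ⟨hs, hr⟩
  · exact iff_of_true hr hs
  · exact iff_of_false hr (not_not.2 hs)

lemma phi_eq_goldenRatio : phi = goldenRatio := rfl

lemma fl_strictMono : StrictMono fl :=
  Nat.strictMono_floor_mul one_lt_goldenRatio.le

lemma fl_zero : fl 0 = 0 := by simp [fl]

lemma fl2_eq_fl_add (n : ℕ) : fl2 n = fl n + n := by
  rw [fl2, fl, phi_eq_goldenRatio, goldenRatio_sq, add_mul, one_mul,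
    Nat.floor_add_natCast (by positivity)]

lemma fl2_strictMono : StrictMono fl2 := fun m n h ↦ by
  have := fl_strictMono h
  rw [fl2_eq_fl_add, fl2_eq_fl_add]
  omega

lemma fl_ne_fl2 {m n : ℕ} (hm : 0 < m) (hn : 0 < n) : fl m ≠ fl2 n := by
  intro h
  have hfl : 0 < fl m := fl_zero ▸ fl_strictMono hm
  have := (goldenRatio_irrational.exists_floor_mul_eq_iff_not holderConjugate_goldenRatio_sq
    hfl).1 ⟨m, hm, rfl⟩
  exact this ⟨n, hn, h.symm⟩

lemma exists_eq_fl_or_eq_fl2 (c : ℕ) : (∃ m, c = fl m) ∨ ∃ m, 0 < m ∧ c = fl2 m := by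
  rcases Nat.eq_zero_or_pos c with rfl | hc
  · exact .inl ⟨0, fl_zero.symm⟩
  by_cases h : ∃ m : ℕ, 0 < m ∧ ⌊goldenRatio ^ 2 * m⌋₊ = c
  · obtain ⟨m, hm, hmc⟩ := h
    exact .inr ⟨m, hm, hmc.symm⟩
  · obtain ⟨m, -, hmc⟩ :=
      (goldenRatio_irrational.exists_floor_mul_eq_iff_not holderConjugate_goldenRatio_sq hc).2 h
    exact .inl ⟨m, hmc.symm⟩

theorem pPos_iff_of_independent_of_absorbing {S : Set (ℕ × ℕ)}
    (hind : ∀ p q, p ∈ S → FMove p q → q ∉ S)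
    (habs : ∀ p, p ∉ S → ∃ q, FMove p q ∧ q ∈ S) (p : ℕ × ℕ) : PPos p ↔ p ∈ S := by
  rw [PPos]
  constructor
  · intro hP
    by_contra hp
    obtain ⟨q, hq, hqS⟩ := habs p hp
    exact hP q hq ((pPos_iff_of_independent_of_absorbing hind habs q).2 hqS)
  · intro hp q hq hqP
    exact hind p q hp hq ((pPos_iff_of_independent_of_absorbing hind habs q).1 hqP)
termination_by p.1 + p.2
decreasing_by all_goals exact fMove_lt hq

def pPositions : Set (ℕ × ℕ) :=
  {p | p = (0, 0) ∨ ∃ n : ℕ, p = (fl n + 1, fl2 n + 1) ∨ p = (fl2 n + 1, fl n + 1)}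

lemma swap_mem_pPositions {p : ℕ × ℕ} : p.swap ∈ pPositions ↔ p ∈ pPositions := by
  simp only [pPositions, Set.mem_ofPred_eq, Prod.ext_iff, Prod.fst_swap, Prod.snd_swap]
  grind

lemma mem_pPositions_iff_of_le {p : ℕ × ℕ} {a b : ℕ} (hab : a ≤ b)
    (hp : p = (a, b) ∨ p = (b, a)) :
    p ∈ pPositions ↔ (a = 0 ∧ b = 0) ∨ ∃ n, a = fl n + 1 ∧ b = fl2 n + 1 := by
  suffices h : (a, b) ∈ pPositions ↔ (a = 0 ∧ b = 0) ∨ ∃ n, a = fl n + 1 ∧ b = fl2 n + 1 by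
    rcases hp with rfl | rfl
    exacts [h, swap_mem_pPositions.trans h]
  simp only [pPositions, Set.mem_ofPred_eq, Prod.ext_iff]
  refine or_congr_right ⟨?_, fun ⟨n, hn⟩ ↦ ⟨n, .inl hn⟩⟩
  rintro ⟨n, hn | hn⟩
  · exact ⟨n, hn⟩
  · have hn0 : n = 0 := by have := fl2_eq_fl_add n; omega
    subst hn0
    exact ⟨0, by simp only [fl2_eq_fl_add, fl_zero] at hn ⊢; omega⟩

lemma notMem_pPositions_of_fMove {p q : ℕ × ℕ} (hp : p ∈ pPositions) (hpq : FMove p q) :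
    q ∉ pPositions := by
  obtain ⟨a, b, x, y, hab, hxy, hpab, hqxy, hmove⟩ := hpq
  rw [mem_pPositions_iff_of_le hab hpab] at hp
  rw [mem_pPositions_iff_of_le hxy hqxy]
  rintro (⟨rfl, rfl⟩ | ⟨m, rfl, rfl⟩) <;> obtain ⟨rfl, rfl⟩ | ⟨n, rfl, rfl⟩ := hp
  · omega
  · omega
  · omega
  have hfl2m := fl2_eq_fl_add m
  have hfl2n := fl2_eq_fl_add n
  rcases hmove with ⟨hx, hy⟩ | ⟨hx, hy⟩ | ⟨hx, hy⟩ | ⟨k, hk, hka, -, hx, hy⟩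
  · obtain rfl := fl_strictMono.injective (by omega : fl m = fl n)
    omega
  · obtain rfl := fl2_strictMono.injective (by omega : fl2 m = fl2 n)
    omega
  · rcases Nat.eq_zero_or_pos m with rfl | hm
    · simp only [fl_zero] at hfl2m hx
      omega
    rcases Nat.eq_zero_or_pos n with rfl | hn
    · simp only [fl_zero] at hx
      omega
    exact fl_ne_fl2 hn hm (by omega)
  · obtain rfl : m = n := by omega
    omega

lemma exists_fMove_mem_pPositions {p : ℕ × ℕ} (hp : p ∉ pPositions) :
    ∃ q, FMove p q ∧ q ∈ pPositions := by
  obtain ⟨a, b, hab, hpab⟩ : ∃ a b, a ≤ b ∧ (p = (a, b) ∨ p = (b, a)) := by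
    rcases le_total p.1 p.2 with h | h
    exacts [⟨_, _, h, .inl rfl⟩, ⟨_, _, h, .inr rfl⟩]
  rw [mem_pPositions_iff_of_le hab hpab, not_or, not_exists] at hp
  have move {x y : ℕ} (hxy : x ≤ y) (h : (x = a ∧ y < b) ∨ (x < a ∧ y = b) ∨ (x < a ∧ y = a) ∨
      (∃ k, 1 ≤ k ∧ k < a ∧ (b - k) / (a - k) = b / a ∧ x = a - k ∧ y = b - k)) :
      FMove p (x, y) :=
    ⟨a, b, x, y, hab, hxy, hpab, .inl rfl, h⟩
  have mem (n : ℕ) : (fl n + 1, fl2 n + 1) ∈ pPositions := .inr ⟨n, .inl rfl⟩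
  have le_fl (n : ℕ) : n ≤ fl n := fl_strictMono.id_le n
  rcases Nat.eq_zero_or_pos a with rfl | ha
  · exact ⟨(0, 0), move le_rfl (.inl ⟨rfl, by omega⟩), .inl rfl⟩
  obtain ⟨m, ham⟩ | ⟨m, hm, ham⟩ := exists_eq_fl_or_eq_fl2 (a - 1)
  · have hfl2m := fl2_eq_fl_add m
    have hlem := le_fl m
    rcases lt_trichotomy b (fl2 m + 1) with hb | hb | hb
    · set d := b - a
      have hfl2d := fl2_eq_fl_add d
      have hled := le_fl d
      have hfld : fl d < fl m := fl_strictMono (by omega)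
      refine ⟨_, move (by omega) (.inr (.inr (.inr
        ⟨a - (fl d + 1), by omega, by omega, ?_, by omega, by omega⟩))), mem d⟩
      rw [Nat.div_eq_one_of_le_of_lt_two_mul (by omega) (by omega),
        Nat.div_eq_one_of_le_of_lt_two_mul hab (by omega)]
    · exact absurd ⟨by omega, hb⟩ (hp.2 m)
    · exact ⟨_, move (by omega) (.inl ⟨by omega, hb⟩), mem m⟩
  · have hfl2m := fl2_eq_fl_add m
    obtain rfl : a = fl2 m + 1 := by omega
    exact ⟨_, move (by omega) (.inr (.inr (.inl ⟨by omega, rfl⟩))), mem m⟩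

theorem stmt9 (p : ℕ × ℕ) :
    PPos p ↔ p ∈ {p : ℕ × ℕ | p = (0, 0) ∨ ∃ n : ℕ, p = (fl n + 1, fl2 n + 1) ∨ p = (fl2 n + 1, fl n + 1)} :=
  pPos_iff_of_independent_of_absorbing (fun _ _ ↦ notMem_pPositions_of_fMove)
    (fun _ ↦ exists_fMove_mem_pPositions) p
end

section
/- In F-Wythoff, for every nonnegative integer g there exists a nonnegative integer b such that G(b,b) = g. -/
section Aux

lemma grundy_eq (p : ℕ × ℕ) :
    grundy p = sInf {g : ℕ | ∀ q, FMove p q → grundy q ≠ g} := by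
  conv_lhs => rw [grundy]

lemma grundy_bdd (p : ℕ × ℕ) :
    ∃ M : ℕ, ∀ q, FMove p q → grundy q < M := by
  classical
  refine ⟨((Finset.range (p.1 + p.2) ×ˢ Finset.range (p.1 + p.2)).image grundy).sup id + 1,
    fun q hq => ?_⟩
  have hlt := fMove_lt hq
  have hmem : q ∈ Finset.range (p.1 + p.2) ×ˢ Finset.range (p.1 + p.2) := by
    simp only [Finset.mem_product, Finset.mem_range]
    omega
  have : grundy q ≤ ((Finset.range (p.1 + p.2) ×ˢ Finset.range (p.1 + p.2)).image grundy).sup id :=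
    Finset.le_sup (f := id) (Finset.mem_image_of_mem grundy hmem)
  omega

lemma grundy_spec (p : ℕ × ℕ) :
    (∀ q, FMove p q → grundy q ≠ grundy p) ∧
    (∀ h, h < grundy p → ∃ q, FMove p q ∧ grundy q = h) := by
  obtain ⟨M, hM⟩ := grundy_bdd p
  have hne : {g : ℕ | ∀ q, FMove p q → grundy q ≠ g}.Nonempty :=
    ⟨M, fun q hq => (hM q hq).ne⟩
  constructor
  · have := Nat.sInf_mem hne
    rw [grundy_eq p]
    exact this
  · intro h hh
    rw [grundy_eq p] at hh
    have := Nat.notMem_of_lt_sInf hh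
    simp only [Set.mem_setOf_eq, not_forall] at this
    obtain ⟨q, hq, hv⟩ := this
    exact ⟨q, hq, by tauto⟩

lemma fMove_swap {a b : ℕ} {q : ℕ × ℕ} (h : FMove (a, b) q) : FMove (b, a) q := by
  obtain ⟨a', b', x, y, h1, h2, h3, h4, h5⟩ := h
  have h3' : (b, a) = (a', b') ∨ (b, a) = (b', a') := by
    rcases h3 with h | h
    · right; rw [Prod.mk.injEq] at h ⊢; exact ⟨h.2, h.1⟩
    · left; rw [Prod.mk.injEq] at h ⊢; exact ⟨h.2, h.1⟩
  exact ⟨a', b', x, y, h1, h2, h3', h4, h5⟩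

lemma grundy_swap (a b : ℕ) : grundy (a, b) = grundy (b, a) := by
  rw [grundy_eq (a, b), grundy_eq (b, a)]
  congr 1
  ext g
  simp only [Set.mem_setOf_eq]
  exact ⟨fun h q hq => h q (fMove_swap hq), fun h q hq => h q (fMove_swap hq)⟩

lemma moveB {a y b : ℕ} (h1 : a ≤ y) (h2 : y < b) : FMove (a, b) (a, y) :=
  ⟨a, b, a, y, by omega, h1, Or.inl rfl, Or.inl rfl, Or.inl ⟨rfl, h2⟩⟩

lemma moveC {x a b : ℕ} (h1 : x < a) (h2 : a ≤ b) : FMove (a, b) (x, a) :=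
  ⟨a, b, x, a, h2, by omega, Or.inl rfl, Or.inl rfl, Or.inr (Or.inr (Or.inl ⟨h1, rfl⟩))⟩

lemma moveD {k n : ℕ} (h1 : 1 ≤ k) (h2 : k < n) : FMove (n, n) (k, k) := by
  refine ⟨n, n, k, k, le_refl n, le_refl k, Or.inl rfl, Or.inl rfl,
    Or.inr (Or.inr (Or.inr ⟨n - k, by omega, by omega, ?_, by omega, by omega⟩))⟩
  have h : n - (n - k) = k := by omega
  rw [h, Nat.div_self (by omega), Nat.div_self (by omega)]

lemma fMove_diag_dest {n : ℕ} {q : ℕ × ℕ} (h : FMove (n, n) q) :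
    (∃ x, x < n ∧ (q = (x, n) ∨ q = (n, x))) ∨ (∃ m, 1 ≤ m ∧ m < n ∧ q = (m, m)) := by
  obtain ⟨a, b, x, y, h1, h2, h3, h4, h5⟩ := h
  have han : a = n ∧ b = n := by
    rcases h3 with h | h <;> · rw [Prod.mk.injEq] at h; omega
  obtain ⟨rfl, rfl⟩ := han
  rcases h5 with ⟨hx, hy⟩ | ⟨hx, hy⟩ | ⟨hx, hy⟩ | ⟨k, hk1, hk2, hdiv, hx, hy⟩
  · omega
  · subst hy
    rcases h4 with h | h
    · exact Or.inl ⟨x, hx, Or.inl h⟩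
    · exact Or.inl ⟨x, hx, Or.inr h⟩
  · subst hy
    rcases h4 with h | h
    · exact Or.inl ⟨x, hx, Or.inl h⟩
    · exact Or.inl ⟨x, hx, Or.inr h⟩
  · have hxy : x = y := by omega
    subst hxy
    right
    refine ⟨x, by omega, by omega, ?_⟩
    rcases h4 with h | h <;> exact h

end Aux

theorem stmt17' (g : ℕ) : ∃ b : ℕ, grundy (b, b) = g := by
  classical
  by_contra hcon
  push_neg at hcon
  -- diagonal values below g occur only finitely often
  have hdiag_inj : ∀ k n : ℕ, 1 ≤ k → k < n → grundy (k, k) ≠ grundy (n, n) :=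
    fun k n hk hkn => (grundy_spec (n, n)).1 (k, k) (moveD hk hkn)
  have hfin : {n : ℕ | 1 ≤ n ∧ grundy (n, n) < g}.Finite := by
    have : {n : ℕ | 1 ≤ n ∧ grundy (n, n) < g}.InjOn (fun n => grundy (n, n)) := by
      intro a ha b hb hab
      by_contra hne
      rcases Nat.lt_or_ge a b with h | h
      · exact hdiag_inj a b ha.1 h hab
      · exact hdiag_inj b a hb.1 (by omega) hab.symm
    have him : (fun n => grundy (n, n)) '' {n : ℕ | 1 ≤ n ∧ grundy (n, n) < g} ⊆ Set.Iio g := by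
      rintro _ ⟨n, hn, rfl⟩; exact hn.2
    exact Set.Finite.of_finite_image ((Set.finite_Iio g).subset him) this
  obtain ⟨N0, hN0⟩ := hfin.bddAbove
  set N : ℕ := N0 + 1 with hN
  -- for every n ≥ N there is x < n with grundy (x, n) = g
  have hstep : ∀ n, N ≤ n → ∃ x, x < n ∧ grundy (x, n) = g := by
    intro n hn
    have hn1 : 1 ≤ n := by omega
    have hlt : g < grundy (n, n) := by
      rcases Nat.lt_trichotomy g (grundy (n, n)) with h | h | h
      · exact h
      · exact absurd h.symm (hcon n)
      · exact absurd (hN0 ⟨hn1, h⟩) (by omega)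
    obtain ⟨q, hq, hv⟩ := (grundy_spec (n, n)).2 g hlt
    rcases fMove_diag_dest hq with ⟨x, hx, hq'⟩ | ⟨m, hm1, hm2, rfl⟩
    · rcases hq' with rfl | rfl
      · exact ⟨x, hx, hv⟩
      · exact ⟨x, hx, by rw [grundy_swap]; exact hv⟩
    · exact absurd hv (hcon m)
  -- in fact x < N
  have hkey : ∀ n, N ≤ n → ∃ x, x < N ∧ grundy (x, n) = g := by
    intro n hn
    obtain ⟨x, hx, hv⟩ := hstep n hn
    rcases Nat.lt_or_ge x N with h | h
    · exact ⟨x, h, hv⟩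
    · obtain ⟨x', hx', hv'⟩ := hstep x h
      exact absurd (hv'.trans hv.symm)
        ((grundy_spec (x, n)).1 (x', x) (moveC hx' (le_of_lt hx)))
  -- choice function
  set X : ℕ → ℕ := fun n => if hn : N ≤ n then (hkey n hn).choose else 0 with hX
  have hXspec : ∀ n, N ≤ n → X n < N ∧ grundy (X n, n) = g := by
    intro n hn
    simp only [hX, dif_pos hn]
    exact (hkey n hn).choose_spec
  -- injectivity
  have hXinj : ∀ m n, N ≤ m → N ≤ n → m < n → X m ≠ X n := by
    intro m n hm hn hmn heq
    obtain ⟨h1, h2⟩ := hXspec m hm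
    obtain ⟨h3, h4⟩ := hXspec n hn
    rw [heq] at h2
    exact (grundy_spec (X n, n)).1 (X n, m) (moveB (by omega) hmn) (h2.trans h4.symm)
  -- pigeonhole
  have hplan : Function.Injective (fun i : Fin (N + 1) => (⟨X (N + i), (hXspec (N + i) (by omega)).1⟩ : Fin N)) := by
    intro i j hij
    simp only [Fin.mk.injEq] at hij
    by_contra hne
    have hij' : (i : ℕ) ≠ (j : ℕ) := fun h => hne (Fin.ext h)
    rcases Nat.lt_or_ge (i : ℕ) (j : ℕ) with h | h
    · exact hXinj (N + i) (N + j) (by omega) (by omega) (by omega) hij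
    · exact hXinj (N + j) (N + i) (by omega) (by omega) (by omega) hij.symm
  have := Fintype.card_le_of_injective _ hplan
  simp only [Fintype.card_fin] at this
  omega

theorem stmt17 (g : ℕ) : ∃ b : ℕ, grundy (b, b) = g := stmt17' g
end
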